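/- Let F be a field with char(F) ≠ 2, 3, and consider the 2-dimensional algebra A on F² with e1·e1 = (1/2)e1, e1·e2 = 0, e2·e1 = (1/2)e2, e2·e2 = 0 as the left product ⊣ of a dialgebra. Then any bilinear product ⊢ making (F², ⊣, ⊢) an associative dialgebra is one of: (a) e1⊢e1 = (1/2)e1 + δ·e2 with all other basis ⊢-products zero (δ ∈ F); (b) e1⊢e1 = (1/2)e1, e1⊢e2 = (1/2)e2; (c) e1⊢e1 = (1/2)e1, e2⊢e1 = (1/2)e2. -/
import Mathlib


/-- Left product: `e1 ⊣ e1 = (1/2)e1`, `e1 ⊣ e2 = 0`, `e2 ⊣ e1 = (1/2)e2`,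
`e2 ⊣ e2 = 0`. -/
def dashv18 {F : Type*} [Field F] (x y : F × F) : F × F :=
  ((1/2 : F) * x.1 * y.1, (1/2 : F) * x.2 * y.1)

theorem stmt_18 {F : Type*} [Field F] (h2 : ringChar F ≠ 2) (h3 : ringChar F ≠ 3)
    (r : (F × F) →ₗ[F] (F × F) →ₗ[F] (F × F))
    (ax1 : ∀ x y z : F × F, dashv18 (dashv18 x y) z = dashv18 x (dashv18 y z))
    (ax2 : ∀ x y z : F × F, dashv18 x (dashv18 y z) = dashv18 x (r y z))
    (ax3 : ∀ x y z : F × F, dashv18 (r x y) z = r x (dashv18 y z))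
    (ax4 : ∀ x y z : F × F, r (dashv18 x y) z = r (r x y) z)
    (ax5 : ∀ x y z : F × F, r (r x y) z = r x (r y z)) :
    (∃ δ : F, ∀ x y : F × F,
        r x y = ((1/2 : F) * x.1 * y.1, δ * x.1 * y.1)) ∨
    (∀ x y : F × F, r x y = ((1/2 : F) * x.1 * y.1, (1/2 : F) * x.1 * y.2)) ∨
    (∀ x y : F × F, r x y = ((1/2 : F) * x.1 * y.1, (1/2 : F) * x.2 * y.1)) := by
  have h2' : (2:F) ≠ 0 := Ring.two_ne_zero h2
  have hi2 : (2⁻¹ : F) ≠ 0 := inv_ne_zero h2'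
  set e1 : F × F := (1, 0) with he1
  set e2 : F × F := (0, 1) with he2
  have hexp : ∀ x y : F × F, r x y =
      (x.1*y.1) • r e1 e1 + (x.1*y.2) • r e1 e2 + (x.2*y.1) • r e2 e1 + (x.2*y.2) • r e2 e2 := by
    intro x y
    have hx : x = x.1 • e1 + x.2 • e2 := by simp [he1, he2, Prod.ext_iff]
    have hy : y = y.1 • e1 + y.2 • e2 := by simp [he1, he2, Prod.ext_iff]
    conv_lhs => rw [hx, hy]
    simp [map_add, map_smul, smul_smul]
    module
  set a := (r e1 e1).1 with ha
  set b := (r e1 e1).2 with hb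
  set c := (r e1 e2).1 with hc
  set d := (r e1 e2).2 with hd
  set p := (r e2 e1).1 with hp
  set q := (r e2 e1).2 with hq
  set s := (r e2 e2).1 with hs
  set t := (r e2 e2).2 with ht
  have key : ∀ x y : F × F, r x y =
      (x.1*y.1*a + x.1*y.2*c + x.2*y.1*p + x.2*y.2*s,
       x.1*y.1*b + x.1*y.2*d + x.2*y.1*q + x.2*y.2*t) := by
    intro x y
    rw [hexp]
    rw [ha, hb, hc, hd, hp, hq, hs, ht]
    simp [Prod.ext_iff, Prod.smul_def]
  have E1 := ax2 e1 e1 e1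
  simp [key, dashv18, he1, he2, Prod.ext_iff] at E1
  have E2 := ax2 e1 e1 e2
  simp [key, dashv18, he1, he2, Prod.ext_iff] at E2
  have E3 := ax2 e1 e2 e1
  simp [key, dashv18, he1, he2, Prod.ext_iff] at E3
  have E4 := ax2 e1 e2 e2
  simp [key, dashv18, he1, he2, Prod.ext_iff] at E4
  have hA : a = 2⁻¹ := (E1.resolve_right h2').symm
  have hC : c = 0 := E2.resolve_left h2'
  have hP : p = 0 := E3.resolve_left h2'
  have hS : s = 0 := E4.resolve_left h2'
  have key2 : ∀ x y : F × F, r x y =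
      (2⁻¹ * (x.1*y.1),
       x.1*y.1*b + x.1*y.2*d + x.2*y.1*q + x.2*y.2*t) := by
    intro x y
    rw [key, hA, hC, hP, hS]
    simp [Prod.ext_iff]; ring
  have F1 := ax4 e2 e1 e1
  simp [key2, dashv18, he1, he2, Prod.ext_iff] at F1
  have F3 := ax4 e1 e1 e1
  simp [key2, dashv18, he1, he2, Prod.ext_iff] at F3
  have F5 := ax4 e1 e2 e1
  simp [key2, dashv18, he1, he2, Prod.ext_iff] at F5
  have F7 := ax4 e2 e2 e2
  simp [key2, dashv18, he1, he2, Prod.ext_iff] at F7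
  have G1 := ax5 e1 e1 e1
  simp [key2, dashv18, he1, he2, Prod.ext_iff] at G1
  have G2 := ax5 e1 e1 e2
  simp [key2, dashv18, he1, he2, Prod.ext_iff] at G2
  -- F1 : 2⁻¹ = q ∨ q = 0, F3 : b = 0 ∨ q = 0, F5 : d = 0 ∨ q = 0, F7 : t = 0
  -- G1 : q = d ∨ b = 0, G2 : 2⁻¹ * d + b * t = d * d
  rcases F1 with hQ | hQ
  · -- q = 2⁻¹ ≠ 0
    have hqne : q ≠ 0 := by rw [← hQ]; exact hi2
    have hB : b = 0 := F3.resolve_right hqne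
    have hD : d = 0 := F5.resolve_right hqne
    right; right
    intro x y
    rw [key2, Prod.ext_iff]
    constructor
    · ring
    · rw [hB, hD, F7, ← hQ]; ring
  · -- q = 0
    have hG2 : 2⁻¹ * d = d * d := by rw [← G2, F7]; ring
    by_cases hD : d = 0
    · left
      exact ⟨b, fun x y => by
        rw [key2, Prod.ext_iff]
        constructor
        · ring
        · rw [hD, hQ, F7]; ring⟩
    · have hDv : d = 2⁻¹ := by
        have := mul_right_cancel₀ hD (by rw [hG2] : 2⁻¹ * d = d * d)
        exact this.symm
      have hB : b = 0 := by
        rcases G1 with h | h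
        · exact absurd (by rw [← h, hQ] : d = 0) hD
        · exact h
      right; left
      intro x y
      rw [key2, Prod.ext_iff]
      constructor
      · ring
      · rw [hB, hQ, F7, hDv]; ring
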